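/- arXiv:1909.08320 — 6 statements merged into one kernel-verified Lean document; each statement's English description precedes it below -/
import Mathlib

section
/- A linear map T : M → A is an O-operator on A with respect to the bimodule M if and only if the map N_T : A ⊕ M → A ⊕ M given by N_T(a, m) = (T(m), 0) is a Nijenhuis operator on the semidirect product algebra A ⊕ M. -/
/-- The semidirect product multiplication on `A × M`. -/
def sdMul {K A M : Type*} [Field K] [AddCommGroup A] [Module K A]
    [AddCommGroup M] [Module K M]
    (mul : A →ₗ[K] A →ₗ[K] A) (l : A →ₗ[K] M →ₗ[K] M) (r : M →ₗ[K] A →ₗ[K] M)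
    (x y : A × M) : A × M :=
  (mul x.1 y.1, l x.1 y.2 + r x.2 y.1)

/-- `T : M → A` is an O-operator iff `N_T(a,m) = (T m, 0)` is a
Nijenhuis operator on the semidirect product algebra `A ⊕ M`. -/
theorem stmt3 {K A M : Type*} [Field K] [AddCommGroup A] [Module K A]
    [AddCommGroup M] [Module K M]
    (mul : A →ₗ[K] A →ₗ[K] A)
    (hassoc : ∀ a b c : A, mul (mul a b) c = mul a (mul b c))
    (l : A →ₗ[K] M →ₗ[K] M) (r : M →ₗ[K] A →ₗ[K] M)
    (hl : ∀ (a b : A) (m : M), l (mul a b) m = l a (l b m))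
    (hlr : ∀ (a : A) (m : M) (b : A), l a (r m b) = r (l a m) b)
    (hr : ∀ (m : M) (a b : A), r m (mul a b) = r (r m a) b)
    (T : M →ₗ[K] A) :
    (∀ m n : M, mul (T m) (T n) = T (r m (T n) + l (T m) n)) ↔
    (∀ x y : A × M,
      sdMul mul l r (T x.2, (0 : M)) (T y.2, (0 : M)) =
        (T (sdMul mul l r (T x.2, (0 : M)) y
            + sdMul mul l r x (T y.2, (0 : M))
            - (T (sdMul mul l r x y).2, (0 : M))).2, (0 : M))) := by
  constructor
  · intro h x y
    simp only [sdMul, Prod.fst_add, Prod.snd_add, Prod.snd_sub, Prod.mk.injEq, map_zero,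
      LinearMap.zero_apply, add_zero, zero_add]
    constructor
    · rw [h x.2 y.2]
      congr 1
      abel
    · trivial
  · intro h m n
    have := h (0, m) (0, n)
    simp only [sdMul, Prod.fst_add, Prod.snd_add, Prod.snd_sub, Prod.mk.injEq, map_zero,
      LinearMap.zero_apply, add_zero, zero_add] at this
    rw [this.1]
    congr 1
    abel
end

section
/- If T : M → A is an O-operator on an associative algebra A with respect to an A-bimodule M, then the operations m ≺ n := m T(n) and m ≻ n := T(m) n define a dendriform algebra structure on M. -/
/-- An O-operator `T : M → A` induces a dendriform algebra structure on `M`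
by `m ≺ n = m T(n)` and `m ≻ n = T(m) n`. -/
theorem stmt4 {K A M : Type*} [Field K] [AddCommGroup A] [Module K A]
    [AddCommGroup M] [Module K M]
    (mul : A →ₗ[K] A →ₗ[K] A)
    (hassoc : ∀ a b c : A, mul (mul a b) c = mul a (mul b c))
    (l : A →ₗ[K] M →ₗ[K] M) (r : M →ₗ[K] A →ₗ[K] M)
    (hl : ∀ (a b : A) (m : M), l (mul a b) m = l a (l b m))
    (hlr : ∀ (a : A) (m : M) (b : A), l a (r m b) = r (l a m) b)
    (hr : ∀ (m : M) (a b : A), r m (mul a b) = r (r m a) b)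
    (T : M →ₗ[K] A)
    (hT : ∀ m n : M, mul (T m) (T n) = T (r m (T n) + l (T m) n)) :
    (∀ a b c : M, r (r a (T b)) (T c) = r a (T (r b (T c) + l (T b) c))) ∧
    (∀ a b c : M, r (l (T a) b) (T c) = l (T a) (r b (T c))) ∧
    (∀ a b c : M, l (T (r a (T b) + l (T a) b)) c = l (T a) (l (T b) c)) := by
  refine ⟨fun a b c => ?_, fun a b c => (hlr _ _ _).symm, fun a b c => ?_⟩
  · rw [← hT, ← hr, hT]
  · rw [← hT, hl]
end

section
/- Let T : M → A be an O-operator. Define l_T(m, a) = T(m)·a − T(ma) and r_T(a, m) = a·T(m) − T(am). Then (l_T, r_T) defines an M-bimodule structure on A, where M carries the associative product m ⋆ n = m T(n) + T(m) n. That is: l_T(m ⋆ n, a) = l_T(m, l_T(n, a)), l_T(m, r_T(a, n)) = r_T(l_T(m, a), n), and r_T(a, m ⋆ n) = r_T(r_T(a, m), n). -/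
/-- For an O-operator `T : M → A`, the maps
`l_T(m,a) = T(m)·a − T(ma)` and `r_T(a,m) = a·T(m) − T(am)` define an `M`-bimodule
structure on `A`, where `M` carries the product `m ⋆ n = m T(n) + T(m) n`. -/
theorem stmt11 {K A M : Type*} [Field K] [AddCommGroup A] [Module K A]
    [AddCommGroup M] [Module K M]
    (mul : A →ₗ[K] A →ₗ[K] A)
    (hassoc : ∀ a b c : A, mul (mul a b) c = mul a (mul b c))
    (l : A →ₗ[K] M →ₗ[K] M) (r : M →ₗ[K] A →ₗ[K] M)
    (hl : ∀ (a b : A) (m : M), l (mul a b) m = l a (l b m))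
    (hlr : ∀ (a : A) (m : M) (b : A), l a (r m b) = r (l a m) b)
    (hr : ∀ (m : M) (a b : A), r m (mul a b) = r (r m a) b)
    (T : M →ₗ[K] A)
    (hT : ∀ m n : M, mul (T m) (T n) = T (r m (T n) + l (T m) n)) :
    -- `lT m a := mul (T m) a - T (r m a)`, `rT a m := mul a (T m) - T (l a m)`,
    -- `star m n := r m (T n) + l (T m) n`
    (∀ (m n : M) (a : A),
      mul (T (r m (T n) + l (T m) n)) a - T (r (r m (T n) + l (T m) n) a) =
      mul (T m) (mul (T n) a - T (r n a)) - T (r m (mul (T n) a - T (r n a)))) ∧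
    (∀ (m : M) (a : A) (n : M),
      mul (T m) (mul a (T n) - T (l a n)) - T (r m (mul a (T n) - T (l a n))) =
      mul (mul (T m) a - T (r m a)) (T n) - T (l (mul (T m) a - T (r m a)) n)) ∧
    (∀ (a : A) (m n : M),
      mul a (T (r m (T n) + l (T m) n)) - T (l a (r m (T n) + l (T m) n)) =
      mul (mul a (T m) - T (l a m)) (T n) - T (l (mul a (T m) - T (l a m)) n)) := by
  refine ⟨?_, ?_, ?_⟩ <;> intros <;>
    simp only [← hT, map_sub, map_add, LinearMap.sub_apply, LinearMap.add_apply, hassoc, hl, hlr,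
      hr] <;>
    simp only [hT, map_add, hl, hlr, hr] <;> abel
end

section
/- Let T : M → A be an O-operator and 𝔗 : M → A a linear map. Then T + t𝔗 is an O-operator for all scalars t if and only if both: (1) T(u)·𝔗(v) + 𝔗(u)·T(v) = T(u𝔗(v) + 𝔗(u)v) + 𝔗(uT(v) + T(u)v) for all u, v ∈ M, and (2) 𝔗 is itself an O-operator. -/
/-- `T + t𝔗` is an O-operator for all scalars `t` iff (1) the 1-cocycle
condition holds and (2) `𝔗` is itself an O-operator. -/
theorem stmt15 {K A M : Type*} [Field K] [CharZero K] [AddCommGroup A] [Module K A]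
    [AddCommGroup M] [Module K M]
    (mul : A →ₗ[K] A →ₗ[K] A)
    (hassoc : ∀ a b c : A, mul (mul a b) c = mul a (mul b c))
    (l : A →ₗ[K] M →ₗ[K] M) (r : M →ₗ[K] A →ₗ[K] M)
    (hl : ∀ (a b : A) (m : M), l (mul a b) m = l a (l b m))
    (hlr : ∀ (a : A) (m : M) (b : A), l a (r m b) = r (l a m) b)
    (hr : ∀ (m : M) (a b : A), r m (mul a b) = r (r m a) b)
    (T : M →ₗ[K] A)
    (hT : ∀ m n : M, mul (T m) (T n) = T (r m (T n) + l (T m) n))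
    (𝔗 : M →ₗ[K] A) :
    (∀ t : K, ∀ m n : M,
      mul ((T + t • 𝔗) m) ((T + t • 𝔗) n) =
        (T + t • 𝔗) (r m ((T + t • 𝔗) n) + l ((T + t • 𝔗) m) n)) ↔
    ((∀ u v : M,
        mul (T u) (𝔗 v) + mul (𝔗 u) (T v) =
          T (r u (𝔗 v) + l (𝔗 u) v) + 𝔗 (r u (T v) + l (T u) v)) ∧
     (∀ u v : M, mul (𝔗 u) (𝔗 v) = 𝔗 (r u (𝔗 v) + l (𝔗 u) v))) := by
  have expand : ∀ t : K, ∀ m n : M,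
      (mul ((T + t • 𝔗) m) ((T + t • 𝔗) n) -
        (T + t • 𝔗) (r m ((T + t • 𝔗) n) + l ((T + t • 𝔗) m) n)) =
      t • (mul (T m) (𝔗 n) + mul (𝔗 m) (T n)
            - T (r m (𝔗 n) + l (𝔗 m) n) - 𝔗 (r m (T n) + l (T m) n))
        + (t * t) • (mul (𝔗 m) (𝔗 n) - 𝔗 (r m (𝔗 n) + l (𝔗 m) n)) := by
    intro t m n
    simp only [LinearMap.add_apply, LinearMap.smul_apply, map_add, map_smul,
      LinearMap.smul_apply, smul_add, smul_sub, smul_smul]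
    have h := hT m n
    simp only [map_add] at h
    linear_combination (norm := module) h
  constructor
  · intro h
    have key : ∀ t : K, ∀ m n : M,
        t • (mul (T m) (𝔗 n) + mul (𝔗 m) (T n)
              - T (r m (𝔗 n) + l (𝔗 m) n) - 𝔗 (r m (T n) + l (T m) n))
          + (t * t) • (mul (𝔗 m) (𝔗 n) - 𝔗 (r m (𝔗 n) + l (𝔗 m) n)) = 0 := by
      intro t m n
      rw [← expand t m n, h t m n, sub_self]
    constructor
    · intro u v
      have k1 := key 1 u v
      have k2 := key 2 u v
      linear_combination (norm := module) (2:K) • k1 - (2⁻¹ : K) • k2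
    · intro u v
      have k1 := key 1 u v
      have k2 := key 2 u v
      linear_combination (norm := module) (2⁻¹ : K) • k2 - k1
  · rintro ⟨h1, h2⟩ t m n
    have e := expand t m n
    have p : mul (T m) (𝔗 n) + mul (𝔗 m) (T n)
            - T (r m (𝔗 n) + l (𝔗 m) n) - 𝔗 (r m (T n) + l (T m) n) = 0 := by
      linear_combination (norm := module) h1 m n
    have q : mul (𝔗 m) (𝔗 n) - 𝔗 (r m (𝔗 n) + l (𝔗 m) n) = 0 := by
      linear_combination (norm := module) h2 m n
    rw [p, q, smul_zero, smul_zero, add_zero] at e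
    exact sub_eq_zero.mp e
end

section
/- An element r ∈ ∧²A is an associative r-matrix (i.e., [[r,r]] = 0) if and only if the induced map r♯ : A* → A is an O-operator on A with respect to the coadjoint bimodule A*. -/
open Module

/-- An element `r ∈ ∧²A` (encoded by the skew-symmetric bilinear form `rm`
on `A*` together with its induced map `rs = r♯ : A* → A`, characterized by
`⟨β, r♯(α)⟩ = r(α,β)`) is an associative r-matrix, i.e. `[[r,r]] = 0`, iff
`r♯` is an O-operator on `A` with respect to the coadjoint bimodule `A*`. -/
theorem stmt17 {K A : Type*} [Field K] [AddCommGroup A] [Module K A]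
    [FiniteDimensional K A]
    (mul : A →ₗ[K] A →ₗ[K] A)
    (hassoc : ∀ a b c : A, mul (mul a b) c = mul a (mul b c))
    (rm : Dual K A →ₗ[K] Dual K A →ₗ[K] K)
    (hskew : ∀ α β : Dual K A, rm α β = - rm β α)
    (rs : Dual K A →ₗ[K] A)
    (hsharp : ∀ α β : Dual K A, β (rs α) = rm α β) :
    (∀ α β γ : Dual K A,
      γ (mul (rs α) (rs β)) + α (mul (rs β) (rs γ)) + β (mul (rs γ) (rs α)) = 0) ↔
    (∀ α β : Dual K A,
      mul (rs α) (rs β) =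
        rs (α.comp (mul (rs β)) + β.comp (mul.flip (rs α)))) := by

  have hanti : ∀ γ δ : Dual K A, γ (rs δ) = - δ (rs γ) := by
    intro γ δ
    rw [hsharp δ γ, hskew, hsharp γ δ]
  have key : ∀ α β γ : Dual K A,
      γ (rs (α.comp (mul (rs β)) + β.comp (mul.flip (rs α)))) =
        - α (mul (rs β) (rs γ)) - β (mul (rs γ) (rs α)) := by
    intro α β γ
    rw [hanti]
    simp [LinearMap.comp_apply]
    ring
  constructor
  · intro h α β
    have : ∀ γ : Dual K A,
        γ (mul (rs α) (rs β) - rs (α.comp (mul (rs β)) + β.comp (mul.flip (rs α)))) = 0 := by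
      intro γ
      rw [map_sub, key]
      linear_combination h α β γ
    have := (Module.forall_dual_apply_eq_zero_iff K _).mp this
    have := sub_eq_zero.mp this
    exact this
  · intro h α β γ
    have := congrArg γ (h α β)
    rw [key] at this
    linear_combination this
end

section
/- A weak morphism (φ, ψ) of r-matrices from r₁ to r₂ on an associative algebra A induces an algebra morphism ψ* on the dual algebras: ψ*(α ⋆_{r₁} β) = ψ*(α) ⋆_{r₂} ψ*(β) for all α, β ∈ A*, where α ⋆_r β = ad^{*l}_{r♯(α)}β + ad^{*r}_{r♯(β)}α. -/
open Module

/-- A weak morphism `(φ, ψ)` of r-matrices from `r₁` to `r₂` (encoded via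
their sharp maps `rs₁, rs₂ : A* → A`) induces an algebra morphism `ψ* : A* → A*` on
the dual algebras: `ψ*(α ⋆_{r₁} β) = ψ*(α) ⋆_{r₂} ψ*(β)`, where
`(α ⋆_r β)(x) = β(x · r♯(α)) + α(r♯(β) · x)`. -/
theorem stmt19 {K A : Type*} [Field K] [AddCommGroup A] [Module K A]
    [FiniteDimensional K A]
    (mul : A →ₗ[K] A →ₗ[K] A)
    (hassoc : ∀ a b c : A, mul (mul a b) c = mul a (mul b c))
    (rs1 rs2 : Dual K A →ₗ[K] A)
    (φ ψ : A →ₗ[K] A)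
    (hφ : ∀ a b : A, φ (mul a b) = mul (φ a) (φ b))
    (hws : ∀ α : Dual K A, rs2 (α.comp ψ) = φ (rs1 α))
    (h2 : ∀ a b : A, ψ (mul (φ a) b) = mul a (ψ b))
    (h3 : ∀ a b : A, ψ (mul a (φ b)) = mul (ψ a) b) :
    ∀ (α β : Dual K A) (x : A),
      β (mul (ψ x) (rs1 α)) + α (mul (rs1 β) (ψ x)) =
      (β.comp ψ) (mul x (rs2 (α.comp ψ))) + (α.comp ψ) (mul (rs2 (β.comp ψ)) x) := by
  intro α β x
  simp only [LinearMap.comp_apply, hws, h2, h3]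
end
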